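/- In the setting of the Theorem 1 key inequality — X : Ω → Matrix (Fin d₁) (Fin d₂) ℝ square-integrable with E[X] = 0, Ỹ := 1{Y ∈ A₁} − 1{Y ∈ A₂} for disjoint measurable A₁, A₂, λ ≥ 0, L(u, v, t) := Var(uᵀXv) + λ·E[(1 − Ỹ(uᵀXv − t))₊], m := σ(ω ↦ UᵀX(ω)V), Y and X conditionally independent given m, and E[uᵀXv | m] = (Uη_r)ᵀX(Vη_c) a.s. for some η_r ∈ ℝ^{r₁}, η_c ∈ ℝ^{r₂} — assume additionally that E[(uᵀXv − E[uᵀXv | m])²] > 0. Then the inequality is strict: L(u, v, t) > L(Uη_r, Vη_c, t). -/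

import Mathlib

/-!
Write `B = uᵀXv` and `B' = (Uη_r)ᵀX(Vη_c)`, so that `B' = E[B | m]`. The law of total variance
gives `Var B = Var B' + E[(B - E[B | m])²]`, a strict drop in the variance term.

For the hinge term, splitting on `Y ∈ A₁` and `Y ∈ A₂` reduces the claim to
`E[g(Y)(a + bB')₊] ≤ E[g(Y)(a + bB)₊]` for `g = 1_{A_i}`. On the `m`-measurable set
`S = {a + bB' ≥ 0}`, conditional independence gives
`E[g(Y) B; S] = E[E[g(Y) | m] B; S] = E[E[g(Y) | m] B'; S] = E[g(Y) B'; S]`, hence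
`E[g(Y)(a + bB')₊] = E[g(Y)(a + bB); S] ≤ E[g(Y)(a + bB)₊]`. Conditional independence is only
available for bounded functions of `X`, so `B` is truncated first and dominated convergence
passes to the limit.
-/

open MeasureTheory ProbabilityTheory Matrix

noncomputable section

instance {m n : Type*} : MeasurableSpace (Matrix m n ℝ) :=
  inferInstanceAs (MeasurableSpace (m → n → ℝ))

/-- The bilinear form `uᵀ M v = Σ_{i,j} uᵢ M_{ij} vⱼ`. -/
def bilin {d₁ d₂ : ℕ} (u : Fin d₁ → ℝ) (M : Matrix (Fin d₁) (Fin d₂) ℝ) (v : Fin d₂ → ℝ) : ℝ :=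
  ∑ i, ∑ j, u i * M i j * v j

/-- The sliced response `Ỹ = 1{Y ∈ A₁} − 1{Y ∈ A₂}`. -/
def sliceLabel {Ω : Type*} (A₁ A₂ : Set ℝ) (Y : Ω → ℝ) (ω : Ω) : ℝ :=
  A₁.indicator 1 (Y ω) - A₂.indicator 1 (Y ω)

/-- The population PSMM objective
`L(u, v, t) = Var(uᵀXv) + λ·E[(1 − Ỹ(uᵀXv − t))₊]`. -/
def PSMMobj {Ω : Type*} [MeasurableSpace Ω] {d₁ d₂ : ℕ} (μ : Measure Ω)
    (X : Ω → Matrix (Fin d₁) (Fin d₂) ℝ) (Ytil : Ω → ℝ) (lam : ℝ)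
    (u : Fin d₁ → ℝ) (v : Fin d₂ → ℝ) (t : ℝ) : ℝ :=
  variance (fun ω => bilin u (X ω) v) μ
    + lam * ∫ ω, max (1 - Ytil ω * (bilin u (X ω) v - t)) 0 ∂μ

/-- Conditional independence of `Y` and `X` given a sub-σ-algebra `m`:
for all bounded measurable `g, h`, `E[g(Y)h(X) | m] = E[g(Y)|m] ⬝ E[h(X)|m]` a.s. -/
def CondIndepBdd {Ω α : Type*} [MeasurableSpace Ω] [MeasurableSpace α]
    (μ : Measure Ω) (m : MeasurableSpace Ω) (Y : Ω → ℝ) (X : Ω → α) : Prop :=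
  ∀ (g : ℝ → ℝ) (h : α → ℝ), Measurable g → Measurable h →
    (∃ C, ∀ x, |g x| ≤ C) → (∃ C, ∀ x, |h x| ≤ C) →
    μ[fun ω => g (Y ω) * h (X ω) | m]
      =ᵐ[μ] fun ω => (μ[fun ω' => g (Y ω') | m]) ω * (μ[fun ω' => h (X ω') | m]) ω

open Filter Topology

theorem abs_indicator_one_le (A : Set ℝ) (y : ℝ) : |A.indicator (1 : ℝ → ℝ) y| ≤ 1 := by
  by_cases h : y ∈ A <;> simp [h]

theorem tendsto_indicator_abs_le_natCast {α : Type*} (h : α → ℝ) (x : α) :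
    Tendsto (fun n : ℕ => {y | |h y| ≤ n}.indicator h x) atTop (𝓝 (h x)) := by
  refine tendsto_const_nhds.congr' ?_
  filter_upwards [eventually_ge_atTop ⌈|h x|⌉₊] with n hn
  have hx : x ∈ {y | |h y| ≤ (n : ℝ)} := show |h x| ≤ n from
    (Nat.le_ceil |h x|).trans (Nat.cast_le.mpr hn)
  exact (Set.indicator_of_mem hx h).symm

section Bilin

variable {d₁ d₂ : ℕ}

theorem bilin_eq_dotProduct_mulVec (u : Fin d₁ → ℝ) (M : Matrix (Fin d₁) (Fin d₂) ℝ)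
    (v : Fin d₂ → ℝ) : bilin u M v = u ⬝ᵥ M *ᵥ v := by
  simp [bilin, dotProduct, mulVec, Finset.mul_sum, mul_assoc]

theorem bilin_mulVec_mulVec {r₁ r₂ : ℕ} (U : Matrix (Fin d₁) (Fin r₁) ℝ)
    (V : Matrix (Fin d₂) (Fin r₂) ℝ) (ηr : Fin r₁ → ℝ) (ηc : Fin r₂ → ℝ)
    (M : Matrix (Fin d₁) (Fin d₂) ℝ) :
    bilin (U *ᵥ ηr) M (V *ᵥ ηc) = bilin ηr (Uᵀ * M * V) ηc := by
  rw [bilin_eq_dotProduct_mulVec, bilin_eq_dotProduct_mulVec, mulVec_mulVec, dotProduct_mulVec,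
    ← vecMul_transpose, vecMul_vecMul, ← dotProduct_mulVec, ← Matrix.mul_assoc]

theorem measurable_bilin (u : Fin d₁ → ℝ) (v : Fin d₂ → ℝ) :
    Measurable fun M : Matrix (Fin d₁) (Fin d₂) ℝ => bilin u M v := by
  unfold bilin
  fun_prop

theorem measurable_transpose_mul_mul {r₁ r₂ : ℕ} (U : Matrix (Fin d₁) (Fin r₁) ℝ)
    (V : Matrix (Fin d₂) (Fin r₂) ℝ) :
    Measurable fun M : Matrix (Fin d₁) (Fin d₂) ℝ => Uᵀ * M * V := by
  refine measurable_pi_lambda _ fun k => measurable_pi_lambda _ fun l => ?_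
  simp only [mul_apply, transpose_apply]
  fun_prop

theorem memLp_bilin {Ω : Type*} [MeasurableSpace Ω] {μ : Measure Ω} {p : ENNReal}
    {X : Ω → Matrix (Fin d₁) (Fin d₂) ℝ} (hX : ∀ i j, MemLp (fun ω => X ω i j) p μ)
    (u : Fin d₁ → ℝ) (v : Fin d₂ → ℝ) :
    MemLp (fun ω => bilin u (X ω) v) p μ := by
  unfold bilin
  refine memLp_finsetSum _ fun i _ => memLp_finsetSum _ fun j _ => ?_
  simpa only [mul_comm _ (v j), ← mul_assoc] using ((hX i j).const_mul (u i)).const_mul (v j)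

end Bilin

section CondExp

variable {Ω : Type*} {m m₀ : MeasurableSpace Ω} {μ : Measure[m₀] Ω}

theorem variance_lt_of_condExp_ae_eq [IsProbabilityMeasure μ] (hm : m ≤ m₀) {B B' : Ω → ℝ}
    (hB : MemLp B 2 μ) (hB' : μ[B | m] =ᵐ[μ] B')
    (hpos : 0 < ∫ ω, (B ω - (μ[B | m]) ω) ^ 2 ∂μ) :
    Var[B'; μ] < Var[B; μ] := by
  have htotal := integral_condVar_add_variance_condExp hm hB
  rw [condVar, integral_condExp hm, variance_congr hB'] at htotal
  simp only [Pi.pow_apply, Pi.sub_apply] at htotal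
  linarith

theorem ae_norm_condExp_le_of_abs_le {f : Ω → ℝ} {C : ℝ} (hfC : ∀ ω, |f ω| ≤ C) :
    ∀ᵐ ω ∂μ, ‖(μ[f | m]) ω‖ ≤ C :=
  ae_bdd_abs_condExp_of_ae_bdd_abs (.of_forall hfC)

theorem setIntegral_mul_condExp_of_bound [IsFiniteMeasure μ] (hm : m ≤ m₀) {Φ f : Ω → ℝ}
    {c : ℝ} (hΦ : StronglyMeasurable[m] Φ) (hΦc : ∀ᵐ ω ∂μ, ‖Φ ω‖ ≤ c) (hf : Integrable f μ)
    {S : Set Ω} (hS : MeasurableSet[m] S) :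
    ∫ ω in S, Φ ω * (μ[f | m]) ω ∂μ = ∫ ω in S, Φ ω * f ω ∂μ := by
  have hΦf : Integrable (Φ * f) μ := hf.bdd_mul (hΦ.mono hm).aestronglyMeasurable hΦc
  rw [show (fun ω => Φ ω * f ω) = Φ * f from rfl, ← setIntegral_condExp hm hΦf hS]
  refine setIntegral_congr_ae (hm S hS) ?_
  filter_upwards [condExp_stronglyMeasurable_mul_of_bound hm hΦ hf c hΦc] with ω hω _
  exact hω.symm

end CondExp

namespace CondIndepBdd

variable {Ω α : Type*} {m m₀ : MeasurableSpace Ω} [MeasurableSpace α] {μ : Measure[m₀] Ω}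
  [IsFiniteMeasure μ] {Y : Ω → ℝ} {X : Ω → α} {g : ℝ → ℝ} {C : ℝ} {S : Set Ω}

theorem setIntegral_mul_eq_condExp_mul_of_bounded (hCI : CondIndepBdd μ m Y X) (hm : m ≤ m₀)
    (hY : Measurable Y) (hX : Measurable X) (hg : Measurable g) (hgC : ∀ y, |g y| ≤ C)
    {h : α → ℝ} (hh : Measurable h) {D : ℝ} (hhD : ∀ x, |h x| ≤ D) (hS : MeasurableSet[m] S) :
    ∫ ω in S, g (Y ω) * h (X ω) ∂μ = ∫ ω in S, (μ[fun ω => g (Y ω) | m]) ω * h (X ω) ∂μ := by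
  have hhX : Integrable (fun ω => h (X ω)) μ :=
    .of_bound (hh.comp hX).aestronglyMeasurable D (.of_forall fun ω => hhD (X ω))
  have hgh : Integrable (fun ω => g (Y ω) * h (X ω)) μ :=
    hhX.bdd_mul (hg.comp hY).aestronglyMeasurable (.of_forall fun ω => hgC (Y ω))
  rw [← setIntegral_condExp hm hgh hS, setIntegral_congr_ae (hm S hS)
      ((hCI g h hg hh ⟨C, hgC⟩ ⟨D, hhD⟩).mono fun ω hω _ => hω)]
  exact setIntegral_mul_condExp_of_bound hm stronglyMeasurable_condExp
    (ae_norm_condExp_le_of_abs_le fun ω => hgC (Y ω)) hhX hS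

theorem setIntegral_mul_eq_condExp_mul (hCI : CondIndepBdd μ m Y X) (hm : m ≤ m₀)
    (hY : Measurable Y) (hX : Measurable X) (hg : Measurable g) (hgC : ∀ y, |g y| ≤ C)
    {h : α → ℝ} (hh : Measurable h) (hhX : Integrable (fun ω => h (X ω)) μ)
    (hS : MeasurableSet[m] S) :
    ∫ ω in S, g (Y ω) * h (X ω) ∂μ = ∫ ω in S, (μ[fun ω => g (Y ω) | m]) ω * h (X ω) ∂μ := by
  set hTrunc : ℕ → α → ℝ := fun n => {x | |h x| ≤ n}.indicator h
  have hTrunc_meas (n : ℕ) : Measurable (hTrunc n) :=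
    hh.indicator (measurableSet_le hh.abs measurable_const)
  have hTrunc_le (n : ℕ) (x : α) : |hTrunc n x| ≤ n := by
    by_cases hx : |h x| ≤ n
    · simp [hTrunc, Set.indicator_of_mem, hx]
    · simp [hTrunc, Set.indicator_of_notMem, hx]
  have hlim (W : Ω → ℝ) (hW : AEStronglyMeasurable W μ) (hWC : ∀ᵐ ω ∂μ, ‖W ω‖ ≤ C) :
      Tendsto (fun n => ∫ ω in S, W ω * hTrunc n (X ω) ∂μ) atTop
        (𝓝 (∫ ω in S, W ω * h (X ω) ∂μ)) := by
    refine tendsto_integral_of_dominated_convergence (fun ω => C * ‖h (X ω)‖)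
      (fun n => (hW.mul ((hTrunc_meas n).comp hX).aestronglyMeasurable).restrict)
      (hhX.norm.const_mul C).restrict (fun n => ae_restrict_of_ae ?_)
      (.of_forall fun ω => (tendsto_indicator_abs_le_natCast h (X ω)).const_mul (W ω))
    filter_upwards [hWC] with ω hω
    rw [norm_mul]
    exact mul_le_mul hω (norm_indicator_le_norm_self _ _) (norm_nonneg _)
      ((norm_nonneg _).trans hω)
  refine tendsto_nhds_unique (hlim _ (hg.comp hY).aestronglyMeasurable
      (.of_forall fun ω => hgC (Y ω))) ?_
  refine (hlim _ (stronglyMeasurable_condExp.mono hm).aestronglyMeasurable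
      (ae_norm_condExp_le_of_abs_le fun ω => hgC (Y ω))).congr fun n => ?_
  exact (setIntegral_mul_eq_condExp_mul_of_bounded hCI hm hY hX hg hgC (hTrunc_meas n)
    (hTrunc_le n) hS).symm

theorem setIntegral_mul_eq_of_condExp_ae_eq (hCI : CondIndepBdd μ m Y X) (hm : m ≤ m₀)
    (hY : Measurable Y) (hX : Measurable X) (hg : Measurable g) (hgC : ∀ y, |g y| ≤ C)
    {h₁ h₂ : α → ℝ} (hh₁ : Measurable h₁) (hh₂ : Measurable h₂)
    (hh₁X : Integrable (fun ω => h₁ (X ω)) μ) (hh₂X : Integrable (fun ω => h₂ (X ω)) μ)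
    (hcond : μ[fun ω => h₁ (X ω) | m] =ᵐ[μ] fun ω => h₂ (X ω)) (hS : MeasurableSet[m] S) :
    ∫ ω in S, g (Y ω) * h₁ (X ω) ∂μ = ∫ ω in S, g (Y ω) * h₂ (X ω) ∂μ := by
  rw [setIntegral_mul_eq_condExp_mul hCI hm hY hX hg hgC hh₁ hh₁X hS,
    setIntegral_mul_eq_condExp_mul hCI hm hY hX hg hgC hh₂ hh₂X hS,
    ← setIntegral_mul_condExp_of_bound hm stronglyMeasurable_condExp
      (ae_norm_condExp_le_of_abs_le fun ω => hgC (Y ω)) hh₁X hS]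
  exact setIntegral_congr_ae (hm S hS) (hcond.mono fun ω hω _ => by rw [hω])

end CondIndepBdd

section Hinge

variable {Ω : Type*} {m m₀ : MeasurableSpace Ω} {μ : Measure[m₀] Ω} {W Z Z' : Ω → ℝ}

theorem integral_mul_max_zero_le_of_setIntegral_eq (hW : ∀ ω, 0 ≤ W ω)
    (hS : MeasurableSet {ω | 0 ≤ Z' ω}) (hWZ : Integrable (fun ω => W ω * Z ω) μ)
    (heq : ∫ ω in {ω | 0 ≤ Z' ω}, W ω * Z' ω ∂μ = ∫ ω in {ω | 0 ≤ Z' ω}, W ω * Z ω ∂μ) :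
    ∫ ω, W ω * max (Z' ω) 0 ∂μ ≤ ∫ ω, W ω * max (Z ω) 0 ∂μ := by
  have hWZpos : Integrable (fun ω => W ω * max (Z ω) 0) μ := by
    simpa only [mul_max_of_nonneg _ _ (hW _), mul_zero] using hWZ.pos_part
  have hind : (fun ω => W ω * max (Z' ω) 0)
      = {ω | 0 ≤ Z' ω}.indicator fun ω => W ω * Z' ω := by
    funext ω
    by_cases hω : 0 ≤ Z' ω
    · simp [hω]
    · simp [hω, (not_le.mp hω).le]
  calc ∫ ω, W ω * max (Z' ω) 0 ∂μ = ∫ ω in {ω | 0 ≤ Z' ω}, W ω * Z ω ∂μ := by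
        rw [hind, integral_indicator hS, heq]
    _ ≤ ∫ ω in {ω | 0 ≤ Z' ω}, W ω * max (Z ω) 0 ∂μ :=
        setIntegral_mono hWZ.integrableOn hWZpos.integrableOn fun ω =>
          mul_le_mul_of_nonneg_left (le_max_left _ _) (hW ω)
    _ ≤ ∫ ω, W ω * max (Z ω) 0 ∂μ :=
        setIntegral_le_integral hWZpos (.of_forall fun ω => mul_nonneg (hW ω) (le_max_right _ _))

theorem integral_mul_max_affine_le (hm : m ≤ m₀) (hW : ∀ ω, 0 ≤ W ω) (hWi : Integrable W μ)
    (hWZ : Integrable (fun ω => W ω * Z ω) μ) (hWZ' : Integrable (fun ω => W ω * Z' ω) μ)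
    (hZ' : StronglyMeasurable[m] Z')
    (horth : ∀ S, MeasurableSet[m] S → ∫ ω in S, W ω * Z ω ∂μ = ∫ ω in S, W ω * Z' ω ∂μ)
    (a b : ℝ) :
    ∫ ω, W ω * max (a + b * Z' ω) 0 ∂μ ≤ ∫ ω, W ω * max (a + b * Z ω) 0 ∂μ := by
  have hS : MeasurableSet[m] {ω | 0 ≤ a + b * Z' ω} :=
    measurableSet_le measurable_const (measurable_const.add (hZ'.measurable.const_mul b))
  have hexpand (F : Ω → ℝ) :
      (fun ω => W ω * (a + b * F ω)) = fun ω => a * W ω + b * (W ω * F ω) := by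
    funext ω
    ring
  refine integral_mul_max_zero_le_of_setIntegral_eq hW (hm _ hS)
    (by rw [hexpand]; exact (hWi.const_mul a).add (hWZ.const_mul b)) ?_
  rw [hexpand, hexpand,
    integral_add (hWi.const_mul a).integrableOn (hWZ'.const_mul b).integrableOn,
    integral_add (hWi.const_mul a).integrableOn (hWZ.const_mul b).integrableOn,
    integral_const_mul, integral_const_mul, integral_const_mul, horth _ hS]

end Hinge

section SliceLabel

variable {Ω : Type*} {A₁ A₂ : Set ℝ} {Y : Ω → ℝ}

-- The affine pieces are written as `a + b * z` to match `integral_mul_max_affine_le`.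
theorem max_one_sub_sliceLabel_mul (hdisj : Disjoint A₁ A₂) (ω : Ω) (z t : ℝ) :
    max (1 - sliceLabel A₁ A₂ Y ω * (z - t)) 0
      = (1 - A₁.indicator 1 (Y ω) - A₂.indicator 1 (Y ω))
        + A₁.indicator 1 (Y ω) * max ((1 + t) + (-1) * z) 0
        + A₂.indicator 1 (Y ω) * max ((1 - t) + 1 * z) 0 := by
  unfold sliceLabel
  by_cases h₁ : Y ω ∈ A₁
  · have h₂ : Y ω ∉ A₂ := Set.disjoint_left.mp hdisj h₁
    simp only [Set.indicator_of_mem h₁, Set.indicator_of_notMem h₂, Pi.one_apply]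
    ring_nf
  · by_cases h₂ : Y ω ∈ A₂
    · simp only [Set.indicator_of_mem h₂, Set.indicator_of_notMem h₁, Pi.one_apply]
      ring_nf
    · simp [Set.indicator_of_notMem h₁, Set.indicator_of_notMem h₂]

variable {m m₀ : MeasurableSpace Ω} {μ : Measure[m₀] Ω} [IsFiniteMeasure μ] {Z Z' : Ω → ℝ}

theorem integral_max_one_sub_sliceLabel_mul_le (hm : m ≤ m₀) (hY : Measurable Y)
    (hA₁ : MeasurableSet A₁) (hA₂ : MeasurableSet A₂) (hdisj : Disjoint A₁ A₂)
    (hZ : Integrable Z μ) (hZ' : Integrable Z' μ) (hZ'm : StronglyMeasurable[m] Z')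
    (horth : ∀ A, MeasurableSet A → ∀ S, MeasurableSet[m] S →
      ∫ ω in S, A.indicator 1 (Y ω) * Z ω ∂μ = ∫ ω in S, A.indicator 1 (Y ω) * Z' ω ∂μ)
    (t : ℝ) :
    ∫ ω, max (1 - sliceLabel A₁ A₂ Y ω * (Z' ω - t)) 0 ∂μ
      ≤ ∫ ω, max (1 - sliceLabel A₁ A₂ Y ω * (Z ω - t)) 0 ∂μ := by
  have hbound (A : Set ℝ) (ω : Ω) : ‖A.indicator (1 : ℝ → ℝ) (Y ω)‖ ≤ 1 :=
    (Real.norm_eq_abs _).trans_le (abs_indicator_one_le A (Y ω))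
  have hW {A : Set ℝ} (hA : MeasurableSet A) : Integrable (fun ω => A.indicator 1 (Y ω)) μ :=
    .of_bound ((measurable_one.indicator hA).comp hY).aestronglyMeasurable 1
      (.of_forall (hbound A))
  have hWF {A : Set ℝ} (hA : MeasurableSet A) {F : Ω → ℝ} (hF : Integrable F μ) :
      Integrable (fun ω => A.indicator 1 (Y ω) * F ω) μ :=
    hF.bdd_mul (hW hA).aestronglyMeasurable (.of_forall (hbound A))
  have hsplit {F : Ω → ℝ} (hF : Integrable F μ) :
      ∫ ω, max (1 - sliceLabel A₁ A₂ Y ω * (F ω - t)) 0 ∂μ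
        = ∫ ω, (1 - A₁.indicator 1 (Y ω) - A₂.indicator 1 (Y ω)) ∂μ
          + ∫ ω, A₁.indicator 1 (Y ω) * max ((1 + t) + (-1) * F ω) 0 ∂μ
          + ∫ ω, A₂.indicator 1 (Y ω) * max ((1 - t) + 1 * F ω) 0 ∂μ := by
    have hF₁ : Integrable (fun ω => A₁.indicator 1 (Y ω) * max ((1 + t) + (-1) * F ω) 0) μ :=
      hWF hA₁ ((integrable_const (1 + t)).add (hF.const_mul (-1))).pos_part
    have hF₂ : Integrable (fun ω => A₂.indicator 1 (Y ω) * max ((1 - t) + 1 * F ω) 0) μ :=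
      hWF hA₂ ((integrable_const (1 - t)).add (hF.const_mul 1)).pos_part
    have h₀ : Integrable (fun ω => (1 : ℝ) - A₁.indicator 1 (Y ω) - A₂.indicator 1 (Y ω)) μ :=
      ((integrable_const 1).sub (hW hA₁)).sub (hW hA₂)
    simp only [max_one_sub_sliceLabel_mul hdisj]
    rw [integral_add (by exact h₀.add hF₁) hF₂, integral_add h₀ hF₁]
  have hmono {A : Set ℝ} (hA : MeasurableSet A) :=
    integral_mul_max_affine_le hm
      (fun ω => Set.indicator_nonneg (f := (1 : ℝ → ℝ)) (fun _ _ => zero_le_one) (Y ω))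
      (hW hA) (hWF hA hZ) (hWF hA hZ') hZ'm (horth A hA)
  rw [hsplit hZ, hsplit hZ']
  linarith [hmono hA₁ (1 + t) (-1), hmono hA₂ (1 - t) 1]

end SliceLabel

theorem stmt_7_general {Ω : Type*} [MeasurableSpace Ω] {μ : Measure Ω} [IsProbabilityMeasure μ]
    {d₁ d₂ r₁ r₂ : ℕ}
    (X : Ω → Matrix (Fin d₁) (Fin d₂) ℝ) (hX : Measurable X)
    (hXL2 : ∀ i j, MemLp (fun ω => X ω i j) 2 μ)
    (Y : Ω → ℝ) (hY : Measurable Y)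
    (A₁ A₂ : Set ℝ) (hA₁ : MeasurableSet A₁) (hA₂ : MeasurableSet A₂)
    (hdisj : Disjoint A₁ A₂)
    (lam : ℝ) (hlam : 0 ≤ lam)
    (U : Matrix (Fin d₁) (Fin r₁) ℝ) (V : Matrix (Fin d₂) (Fin r₂) ℝ)
    (u : Fin d₁ → ℝ) (v : Fin d₂ → ℝ) (t : ℝ)
    (ηr : Fin r₁ → ℝ) (ηc : Fin r₂ → ℝ)
    (hCI : CondIndepBdd μ
      (MeasurableSpace.comap (fun ω => Uᵀ * X ω * V) inferInstance) Y X)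
    (hbilin : μ[fun ω => bilin u (X ω) v |
        MeasurableSpace.comap (fun ω => Uᵀ * X ω * V) inferInstance]
      =ᵐ[μ] fun ω => bilin (U.mulVec ηr) (X ω) (V.mulVec ηc))
    (hpos : 0 < ∫ ω, (bilin u (X ω) v
        - (μ[fun ω' => bilin u (X ω') v |
            MeasurableSpace.comap (fun ω' => Uᵀ * X ω' * V) inferInstance]) ω) ^ 2 ∂μ) :
    PSMMobj μ X (sliceLabel A₁ A₂ Y) lam (U.mulVec ηr) (V.mulVec ηc) t
      < PSMMobj μ X (sliceLabel A₁ A₂ Y) lam u v t := by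
  have hm := ((measurable_transpose_mul_mul U V).comp hX).comap_le
  have hB := memLp_bilin hXL2 u v
  have hB' := memLp_bilin hXL2 (U *ᵥ ηr) (V *ᵥ ηc)
  have hB'm : StronglyMeasurable[MeasurableSpace.comap (fun ω => Uᵀ * X ω * V) inferInstance]
      fun ω => bilin (U *ᵥ ηr) (X ω) (V *ᵥ ηc) := by
    simp only [bilin_mulVec_mulVec]
    exact ((measurable_bilin ηr ηc).comp (comap_measurable _)).stronglyMeasurable
  have horth (A : Set ℝ) (hA : MeasurableSet A) (S : Set Ω) hS :=
    hCI.setIntegral_mul_eq_of_condExp_ae_eq (S := S) hm hY hX (measurable_one.indicator hA)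
      (abs_indicator_one_le A) (measurable_bilin u v) (measurable_bilin _ _)
      (hB.integrable one_le_two) (hB'.integrable one_le_two) hbilin hS
  exact add_lt_add_of_lt_of_le (variance_lt_of_condExp_ae_eq hm hB hbilin hpos)
    (mul_le_mul_of_nonneg_left (integral_max_one_sub_sliceLabel_mul_le hm hY hA₁ hA₂ hdisj
      (hB.integrable one_le_two) (hB'.integrable one_le_two) hB'm horth t) hlam)

/-- **Strict version of the key inequality in Theorem 1.** If moreover
`E[(uᵀXv − E[uᵀXv | σ(UᵀXV)])²] > 0`, then `L(u,v,t) > L(Uη_r, Vη_c, t)`. -/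
theorem stmt_7 {Ω : Type*} [MeasurableSpace Ω] {μ : Measure Ω} [IsProbabilityMeasure μ]
    {d₁ d₂ r₁ r₂ : ℕ}
    (X : Ω → Matrix (Fin d₁) (Fin d₂) ℝ) (hX : Measurable X)
    (hXL2 : ∀ i j, MemLp (fun ω => X ω i j) 2 μ)
    (hXmean : ∀ i j, ∫ ω, X ω i j ∂μ = 0)
    (Y : Ω → ℝ) (hY : Measurable Y)
    (A₁ A₂ : Set ℝ) (hA₁ : MeasurableSet A₁) (hA₂ : MeasurableSet A₂)
    (hdisj : Disjoint A₁ A₂)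
    (lam : ℝ) (hlam : 0 ≤ lam)
    (U : Matrix (Fin d₁) (Fin r₁) ℝ) (V : Matrix (Fin d₂) (Fin r₂) ℝ)
    (u : Fin d₁ → ℝ) (v : Fin d₂ → ℝ) (t : ℝ)
    (ηr : Fin r₁ → ℝ) (ηc : Fin r₂ → ℝ)
    (hCI : CondIndepBdd μ
      (MeasurableSpace.comap (fun ω => Uᵀ * X ω * V) inferInstance) Y X)
    (hbilin : μ[fun ω => bilin u (X ω) v |
        MeasurableSpace.comap (fun ω => Uᵀ * X ω * V) inferInstance]
      =ᵐ[μ] fun ω => bilin (U.mulVec ηr) (X ω) (V.mulVec ηc))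
    (hpos : 0 < ∫ ω, (bilin u (X ω) v
        - (μ[fun ω' => bilin u (X ω') v |
            MeasurableSpace.comap (fun ω' => Uᵀ * X ω' * V) inferInstance]) ω) ^ 2 ∂μ) :
    PSMMobj μ X (sliceLabel A₁ A₂ Y) lam (U.mulVec ηr) (V.mulVec ηc) t
      < PSMMobj μ X (sliceLabel A₁ A₂ Y) lam u v t :=
  stmt_7_general X hX hXL2 Y hY A₁ A₂ hA₁ hA₂ hdisj lam hlam U V u v t ηr ηc hCI hbilin hpos
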